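/- arXiv:2202.00076 — 2 statements merged into one kernel-verified Lean document; each statement's English description precedes it below -/
import Mathlib

section
/- Assume 0 ≤ r_h(s,a) ≤ 1 for all h, s, a; assume each map θ ↦ π_{θ,h}(s)(a) is differentiable, and there is G ≥ 0 such that |∂π_{θ,h}(s)(a)/∂θ_j| ≤ G · π_{θ,h}(s)(a) for all θ, h, s, a, and j ∈ {1,…,m}. Then for every θ ∈ ℝ^m, every h ∈ {1,…,H+1}, and all (s,a): 0 ≤ Q_h^θ(s,a) ≤ H − h + 1, and |∂Q_h^θ(s,a)/∂θ_j| ≤ G (H − h)² for every j ∈ {1,…,m}. -/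
/-!
Backward induction on `h`, with `n = H - h + 1` steps to go. Averaging over the policy and the
transition kernel keeps the values in `[0, n]`. In the gradient of `∑ₐ π Q_{h+1}`, the product
rule together with `|∂π| ≤ G π` and `Q_{h+1} ≤ n - 1` adds `G (n - 1)` to the bound on
`|∂Q_{h+1}|`, so `|∂Q_h| ≤ G n (n - 1) / 2 ≤ G (H - h)²`.
-/

open Finset

section WeightedSum

variable {ι : Type*} [Fintype ι] {w f : ι → ℝ} {c : ℝ}

theorem sum_mul_le_of_forall_le (hw : ∀ i, 0 ≤ w i) (hw1 : ∑ i, w i = 1)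
    (hf : ∀ i, f i ≤ c) : ∑ i, w i * f i ≤ c :=
  calc ∑ i, w i * f i ≤ ∑ i, w i * c :=
        sum_le_sum fun i _ => mul_le_mul_of_nonneg_left (hf i) (hw i)
    _ = c := by rw [← sum_mul, hw1, one_mul]

theorem abs_sum_mul_le_of_forall_abs_le (hw : ∀ i, 0 ≤ w i) (hw1 : ∑ i, w i = 1)
    (hf : ∀ i, |f i| ≤ c) : |∑ i, w i * f i| ≤ c :=
  calc |∑ i, w i * f i| ≤ ∑ i, w i * |f i| :=
        (abs_sum_le_sum_abs _ _).trans_eq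
          (sum_congr rfl fun i _ => by rw [abs_mul, abs_of_nonneg (hw i)])
    _ ≤ c := sum_mul_le_of_forall_le hw hw1 hf

end WeightedSum

section Derivative

variable {E ι : Type*} [NormedAddCommGroup E] [NormedSpace ℝ E] [Fintype ι] {x v : E} {G M D : ℝ}

theorem abs_fderiv_mul_le {f g : E → ℝ} (hf : DifferentiableAt ℝ f x)
    (hg : DifferentiableAt ℝ g x) (hf0 : 0 ≤ f x) (hg0 : 0 ≤ g x) (hgM : g x ≤ M)
    (hdf : |fderiv ℝ f x v| ≤ G * f x) (hdg : |fderiv ℝ g x v| ≤ D) :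
    |fderiv ℝ (fun y => f y * g y) x v| ≤ f x * (D + G * M) := by
  rw [fderiv_fun_mul hf hg]
  simp only [add_apply, smul_apply, smul_eq_mul]
  calc |f x * fderiv ℝ g x v + g x * fderiv ℝ f x v|
        ≤ f x * |fderiv ℝ g x v| + g x * |fderiv ℝ f x v| := by
          simpa only [abs_mul, abs_of_nonneg hf0, abs_of_nonneg hg0] using
            abs_add_le (f x * fderiv ℝ g x v) (g x * fderiv ℝ f x v)
    _ ≤ f x * D + M * (G * f x) :=
        add_le_add (mul_le_mul_of_nonneg_left hdg hf0)
          (mul_le_mul hgM hdf (abs_nonneg _) (hg0.trans hgM))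
    _ = f x * (D + G * M) := by ring

theorem abs_fderiv_sum_mul_le {w F : E → ι → ℝ} (hwd : ∀ i, DifferentiableAt ℝ (w · i) x)
    (hFd : ∀ i, DifferentiableAt ℝ (F · i) x) (hw0 : ∀ i, 0 ≤ w x i) (hw1 : ∑ i, w x i = 1)
    (hF0 : ∀ i, 0 ≤ F x i) (hFM : ∀ i, F x i ≤ M)
    (hdw : ∀ i, |fderiv ℝ (w · i) x v| ≤ G * w x i) (hdF : ∀ i, |fderiv ℝ (F · i) x v| ≤ D) :
    |fderiv ℝ (fun y => ∑ i, w y i * F y i) x v| ≤ D + G * M := by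
  rw [fderiv_fun_sum fun i _ => (hwd i).fun_mul (hFd i), _root_.sum_apply]
  calc _ ≤ ∑ i, |fderiv ℝ (fun y => w y i * F y i) x v| := abs_sum_le_sum_abs _ _
    _ ≤ ∑ i, w x i * (D + G * M) := sum_le_sum fun i _ =>
        abs_fderiv_mul_le (hwd i) (hFd i) (hw0 i) (hF0 i) (hFM i) (hdw i) (hdF i)
    _ = D + G * M := by rw [← sum_mul, hw1, one_mul]

theorem abs_fderiv_const_add_sum_mul_le {c : ℝ} {w : ι → ℝ} {F : E → ι → ℝ}
    (hFd : ∀ i, DifferentiableAt ℝ (F · i) x) (hw0 : ∀ i, 0 ≤ w i) (hw1 : ∑ i, w i = 1)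
    (hdF : ∀ i, |fderiv ℝ (F · i) x v| ≤ D) :
    |fderiv ℝ (fun y => c + ∑ i, w i * F y i) x v| ≤ D := by
  rw [fderiv_const_add, fderiv_fun_sum fun i _ => (hFd i).const_mul (w i)]
  simp only [_root_.sum_apply, fderiv_const_mul (hFd _), smul_apply, smul_eq_mul]
  exact abs_sum_mul_le_of_forall_abs_le hw0 hw1 hdF

end Derivative

section Bellman

variable {E S A J : Type*} [NormedAddCommGroup E] [NormedSpace ℝ E]

def bellmanBackup [Fintype S] [Fintype A] (r : S → A → ℝ) (p : S → A → S → ℝ) (π V : S → A → ℝ)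
    (s : S) (a : A) : ℝ :=
  r s a + ∑ s', p s a s' * ∑ a', π s' a' * V s' a'

def HorizonBound (v : J → E) (G n : ℝ) (V : E → S → A → ℝ) : Prop :=
  ∀ s a, Differentiable ℝ (fun x => V x s a) ∧ ∀ x, 0 ≤ V x s a ∧ V x s a ≤ n ∧
    ∀ j, |fderiv ℝ (fun y => V y s a) x (v j)| ≤ G * (n * (n - 1) / 2)

theorem horizonBound_zero (v : J → E) (G : ℝ) :
    HorizonBound v G 0 (fun (_ : E) (_ : S) (_ : A) => (0 : ℝ)) :=
  fun _ _ => ⟨differentiable_const 0, fun _ => ⟨le_rfl, le_rfl, fun _ => by simp⟩⟩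

theorem HorizonBound.bellmanBackup [Fintype S] [Fintype A] {v : J → E} {G n : ℝ}
    {r : S → A → ℝ} {p : S → A → S → ℝ} {π V : E → S → A → ℝ} (hV : HorizonBound v G n V)
    (hp0 : ∀ s a s', 0 ≤ p s a s') (hp1 : ∀ s a, ∑ s', p s a s' = 1)
    (hr0 : ∀ s a, 0 ≤ r s a) (hr1 : ∀ s a, r s a ≤ 1)
    (hπ0 : ∀ x s a, 0 ≤ π x s a) (hπ1 : ∀ x s, ∑ a, π x s a = 1)
    (hπd : ∀ s a, Differentiable ℝ fun x => π x s a)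
    (hπg : ∀ x s a j, |fderiv ℝ (fun y => π y s a) x (v j)| ≤ G * π x s a) :
    HorizonBound v G (n + 1) (fun x => bellmanBackup r p (π x) (V x)) := by
  have hVd s a : Differentiable ℝ fun x => V x s a := (hV s a).1
  have hV0 x s a : 0 ≤ V x s a := ((hV s a).2 x).1
  have hVn x s a : V x s a ≤ n := ((hV s a).2 x).2.1
  have havg_d s' : Differentiable ℝ fun x => ∑ a', π x s' a' * V x s' a' := by fun_prop
  have havg_n x s' : ∑ a', π x s' a' * V x s' a' ≤ n :=
    sum_mul_le_of_forall_le (hπ0 x s') (hπ1 x s') (hVn x s')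
  intro s a
  unfold _root_.bellmanBackup
  refine ⟨by fun_prop, fun x => ⟨?_, ?_, fun j => ?_⟩⟩
  · exact add_nonneg (hr0 s a) <| sum_nonneg fun s' _ => mul_nonneg (hp0 s a s') <|
      sum_nonneg fun a' _ => mul_nonneg (hπ0 x s' a') (hV0 x s' a')
  · have := sum_mul_le_of_forall_le (hp0 s a) (hp1 s a) (havg_n x)
    linarith [hr1 s a]
  · refine (abs_fderiv_const_add_sum_mul_le (fun s' => (havg_d s') x) (hp0 s a) (hp1 s a)
      fun s' => abs_fderiv_sum_mul_le (fun a' => (hπd s' a') x) (fun a' => (hVd s' a') x)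
        (hπ0 x s') (hπ1 x s') (hV0 x s') (hVn x s') (fun a' => hπg x s' a' j)
        fun a' => ((hV s' a').2 x).2.2 j).trans_eq ?_
    ring

end Bellman

theorem mul_sub_one_div_two_le_sq (k : ℕ) : (k : ℝ) * (k - 1) / 2 ≤ ((k : ℝ) - 1) ^ 2 := by
  rcases k with _ | k
  · norm_num
  · have : (k : ℝ) ≤ k * k := by exact_mod_cast Nat.le_mul_self k
    push_cast
    nlinarith

theorem q_function_and_gradient_bounds_general
    {S A : Type*} [Fintype S] [Fintype A]
    (m H : ℕ)
    (p : ℕ → S → A → S → ℝ) (r : ℕ → S → A → ℝ)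
    (π : (Fin m → ℝ) → ℕ → S → A → ℝ)
    (hp_nonneg : ∀ h, 1 ≤ h → h ≤ H → ∀ s a s', 0 ≤ p h s a s')
    (hp_sum : ∀ h, 1 ≤ h → h ≤ H → ∀ s a, ∑ s', p h s a s' = 1)
    (hπ_nonneg : ∀ θ h, 1 ≤ h → h ≤ H + 1 → ∀ s a, 0 ≤ π θ h s a)
    (hπ_sum : ∀ θ h, 1 ≤ h → h ≤ H + 1 → ∀ s, ∑ a, π θ h s a = 1)
    (hr_nonneg : ∀ h, 1 ≤ h → h ≤ H → ∀ s a, 0 ≤ r h s a)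
    (hr_le_one : ∀ h, 1 ≤ h → h ≤ H → ∀ s a, r h s a ≤ 1)
    (hπ_diff : ∀ h s a, Differentiable ℝ fun θ => π θ h s a)
    (G : ℝ) (hG : 0 ≤ G)
    (hπ_grad : ∀ (θ : Fin m → ℝ) (h : ℕ), 1 ≤ h → h ≤ H + 1 → ∀ s a (j : Fin m),
      |fderiv ℝ (fun θ' => π θ' h s a) θ (Pi.single j 1)| ≤ G * π θ h s a)
    (Q : (Fin m → ℝ) → ℕ → S → A → ℝ)
    (hQtop : ∀ θ s a, Q θ (H + 1) s a = 0)
    (hQrec : ∀ θ h, 1 ≤ h → h ≤ H → ∀ s a,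
      Q θ h s a = r h s a
        + ∑ s', p h s a s' * ∑ a', π θ (h + 1) s' a' * Q θ (h + 1) s' a') :
    ∀ (θ : Fin m → ℝ) (h : ℕ), 1 ≤ h → h ≤ H + 1 → ∀ s a,
      0 ≤ Q θ h s a ∧ Q θ h s a ≤ (H : ℝ) - h + 1 ∧
        ∀ j : Fin m,
          |fderiv ℝ (fun θ' => Q θ' h s a) θ (Pi.single j 1)| ≤ G * ((H : ℝ) - h) ^ 2 := by
  have hbound : ∀ h, h ≤ H + 1 → 1 ≤ h →
      HorizonBound (fun j : Fin m => Pi.single j 1) G ((H : ℝ) - h + 1) fun θ => Q θ h := by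
    intro h hh
    induction hh using Nat.decreasingInduction with
    | self =>
      intro _
      rw [show (H : ℝ) - (H + 1 : ℕ) + 1 = 0 by push_cast; ring]
      convert horizonBound_zero (S := S) (A := A) _ G using 1
      exact funext fun θ => funext₂ (hQtop θ)
    | of_succ h hlt ih =>
      intro h1
      have hQ : (fun θ => Q θ h) =
          fun θ => bellmanBackup (r h) (p h) (π θ (h + 1)) (Q θ (h + 1)) :=
        funext fun θ => funext₂ (hQrec θ h h1 (by omega))
      rw [hQ, show (H : ℝ) - h + 1 = (H - (h + 1 : ℕ) + 1) + 1 by push_cast; ring]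
      exact (ih (by omega)).bellmanBackup (hp_nonneg h h1 (by omega)) (hp_sum h h1 (by omega))
        (hr_nonneg h h1 (by omega)) (hr_le_one h h1 (by omega))
        (fun θ => hπ_nonneg θ (h + 1) (by omega) (by omega))
        (fun θ => hπ_sum θ (h + 1) (by omega) (by omega)) (hπ_diff (h + 1))
        (fun θ => hπ_grad θ (h + 1) (by omega) (by omega))
  intro θ h h1 hh s a
  obtain ⟨hQ0, hQn, hdQ⟩ := (hbound h hh h1 s a).2 θ
  refine ⟨hQ0, hQn, fun j => (hdQ j).trans (mul_le_mul_of_nonneg_left ?_ hG)⟩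
  have := mul_sub_one_div_two_le_sq (H + 1 - h)
  push_cast [Nat.cast_sub hh] at this
  linear_combination this

theorem q_function_and_gradient_bounds
    {S A : Type*} [Fintype S] [Fintype A] [Nonempty S] [Nonempty A]
    (m H : ℕ)
    (p : ℕ → S → A → S → ℝ) (r : ℕ → S → A → ℝ)
    (π : (Fin m → ℝ) → ℕ → S → A → ℝ)
    (hp_nonneg : ∀ h, 1 ≤ h → h ≤ H → ∀ s a s', 0 ≤ p h s a s')
    (hp_sum : ∀ h, 1 ≤ h → h ≤ H → ∀ s a, ∑ s', p h s a s' = 1)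
    (hπ_nonneg : ∀ θ h, 1 ≤ h → h ≤ H + 1 → ∀ s a, 0 ≤ π θ h s a)
    (hπ_sum : ∀ θ h, 1 ≤ h → h ≤ H + 1 → ∀ s, ∑ a, π θ h s a = 1)
    (hr_nonneg : ∀ h, 1 ≤ h → h ≤ H → ∀ s a, 0 ≤ r h s a)
    (hr_le_one : ∀ h, 1 ≤ h → h ≤ H → ∀ s a, r h s a ≤ 1)
    (hπ_diff : ∀ h s a, Differentiable ℝ fun θ => π θ h s a)
    (G : ℝ) (hG : 0 ≤ G)
    (hπ_grad : ∀ (θ : Fin m → ℝ) (h : ℕ), 1 ≤ h → h ≤ H + 1 → ∀ s a (j : Fin m),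
      |fderiv ℝ (fun θ' => π θ' h s a) θ (Pi.single j 1)| ≤ G * π θ h s a)
    (Q : (Fin m → ℝ) → ℕ → S → A → ℝ)
    (hQtop : ∀ θ s a, Q θ (H + 1) s a = 0)
    (hQrec : ∀ θ h, 1 ≤ h → h ≤ H → ∀ s a,
      Q θ h s a = r h s a
        + ∑ s', p h s a s' * ∑ a', π θ (h + 1) s' a' * Q θ (h + 1) s' a') :
    ∀ (θ : Fin m → ℝ) (h : ℕ), 1 ≤ h → h ≤ H + 1 → ∀ s a,
      0 ≤ Q θ h s a ∧ Q θ h s a ≤ (H : ℝ) - h + 1 ∧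
        ∀ j : Fin m,
          |fderiv ℝ (fun θ' => Q θ' h s a) θ (Pi.single j 1)| ≤ G * ((H : ℝ) - h) ^ 2 :=
  q_function_and_gradient_bounds_general m H p r π hp_nonneg hp_sum hπ_nonneg hπ_sum hr_nonneg
    hr_le_one hπ_diff G hG hπ_grad Q hQtop hQrec
end

section
/- Let Σ and Σ' be positive definite real d×d matrices, Σ̂ an invertible real d×d matrix, and M, ΔY real d×d matrices with ‖Σ^{1/2} M Σ'^{-1/2}‖ ≤ 1. Define M̂ := Σ̂^{-1} (Σ M + ΔY). Then ‖Σ^{1/2} (M̂ − M) Σ'^{-1/2}‖ ≤ (1 + ‖Σ^{1/2} (Σ̂^{-1} − Σ^{-1}) Σ^{1/2}‖)(1 + ‖Σ^{-1/2} ΔY Σ'^{-1/2}‖) − 1. -/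
open Matrix

/-- The spectral norm (ℓ²→ℓ² operator norm) of a real square matrix. -/
noncomputable def specNorm {d : ℕ} (A : Matrix (Fin d) (Fin d) ℝ) : ℝ :=
  ‖Matrix.toEuclideanCLM (𝕜 := ℝ) A‖

open Classical in
/-- The positive semidefinite square root of a positive semidefinite real matrix
(junk value `0` on matrices that are not positive semidefinite). -/
noncomputable def msqrt {d : ℕ} (A : Matrix (Fin d) (Fin d) ℝ) : Matrix (Fin d) (Fin d) ℝ :=
  if h : A.PosSemidef then
    h.1.eigenvectorUnitary.1 * diagonal ((↑) ∘ (√·) ∘ h.1.eigenvalues) *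
      (star h.1.eigenvectorUnitary : Matrix (Fin d) (Fin d) ℝ)
  else 0

/-!
Write `Q = Σ^{1/2}`, `E = Q (Σ̂⁻¹ - Σ⁻¹) Q`, `F = Q⁻¹ ΔY Σ'^{-1/2}` and `T = Q M Σ'^{-1/2}`.
Since `Q Σ⁻¹ Q = 1`, the whitened error is exactly `E T + E F + F`, and with `‖T‖ ≤ 1`
its norm is at most `‖E‖ + ‖E‖ ‖F‖ + ‖F‖ = (1 + ‖E‖)(1 + ‖F‖) - 1`.
-/

open scoped MatrixOrder

theorem msqrt_eq_sqrt {d : ℕ} {A : Matrix (Fin d) (Fin d) ℝ} (hA : A.PosSemidef) :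
    msqrt A = CFC.sqrt A := by
  rw [CFC.sqrt_eq_cfc, cfc_nnreal_eq_real _ A, hA.1.cfc_eq, msqrt, dif_pos hA,
    IsHermitian.cfc, Unitary.conjStarAlgAut_apply]
  congr 3
  ext i
  simp [Real.coe_sqrt, hA.eigenvalues_nonneg i]

theorem msqrt_mul_self {d : ℕ} {A : Matrix (Fin d) (Fin d) ℝ} (hA : A.PosSemidef) :
    msqrt A * msqrt A = A := by
  rw [msqrt_eq_sqrt hA, CFC.sqrt_mul_sqrt_self A hA.nonneg]

theorem isUnit_msqrt {d : ℕ} {A : Matrix (Fin d) (Fin d) ℝ} (hA : A.PosDef) :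
    IsUnit (msqrt A) := by
  rw [msqrt_eq_sqrt hA.posSemidef, CFC.isUnit_sqrt_iff A hA.posSemidef.nonneg]
  exact hA.isUnit

theorem conj_transition_error_eq {R : Type*} [Ring R] {Q Qinv S Sinv : R}
    (hQ : Q * Qinv = 1) (hQ' : Qinv * Q = 1) (hS : Q * Q = S) (hSinv : Qinv * Qinv = Sinv)
    (H M Δ P : R) :
    Q * (H * (S * M + Δ) - M) * P =
      Q * (H - Sinv) * Q * (Q * M * P) + Q * (H - Sinv) * Q * (Qinv * Δ * P) + Qinv * Δ * P := by
  have hE : Q * (H - Sinv) * Q = Q * H * Q - 1 := by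
    rw [mul_sub, sub_mul, ← hSinv, show Q * (Qinv * Qinv) * Q = Q * Qinv * (Qinv * Q) by
      simp only [mul_assoc], hQ, hQ', one_mul]
  have hF : Q * H * Q * (Qinv * Δ * P) = Q * H * Δ * P := by
    rw [show Q * H * Q * (Qinv * Δ * P) = Q * H * (Q * Qinv) * Δ * P by
      simp only [mul_assoc], hQ, mul_one]
  rw [hE, ← hS, sub_mul (Q * H * Q) 1 (Qinv * Δ * P), hF]
  noncomm_ring

theorem norm_mul_add_mul_add_le {A : Type*} [SeminormedRing A] {E T F : A} (hT : ‖T‖ ≤ 1) :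
    ‖E * T + E * F + F‖ ≤ (1 + ‖E‖) * (1 + ‖F‖) - 1 :=
  calc ‖E * T + E * F + F‖ ≤ ‖E‖ * ‖T‖ + ‖E‖ * ‖F‖ + ‖F‖ :=
        (norm_add₃_le).trans (by gcongr <;> exact norm_mul_le _ _)
    _ ≤ ‖E‖ * 1 + ‖E‖ * ‖F‖ + ‖F‖ := by gcongr
    _ = (1 + ‖E‖) * (1 + ‖F‖) - 1 := by ring

theorem estimated_transition_perturbation_bound_general {d : ℕ}
    (S S' Shat M ΔY : Matrix (Fin d) (Fin d) ℝ)
    (hS : S.PosDef)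
    (hM : specNorm (msqrt S * M * (msqrt S')⁻¹) ≤ 1) :
    specNorm (msqrt S * (Shat⁻¹ * (S * M + ΔY) - M) * (msqrt S')⁻¹)
      ≤ (1 + specNorm (msqrt S * (Shat⁻¹ - S⁻¹) * msqrt S))
          * (1 + specNorm ((msqrt S)⁻¹ * ΔY * (msqrt S')⁻¹)) - 1 := by
  have hQ : IsUnit (msqrt S).det := (isUnit_iff_isUnit_det _).1 (isUnit_msqrt hS)
  have hQQ : msqrt S * msqrt S = S := msqrt_mul_self hS.posSemidef
  rw [conj_transition_error_eq (mul_nonsing_inv _ hQ) (nonsing_inv_mul _ hQ) hQQ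
    (by rw [← Matrix.mul_inv_rev, hQQ])]
  simp only [specNorm, map_add, map_mul] at hM ⊢
  exact norm_mul_add_mul_add_le hM

theorem estimated_transition_perturbation_bound {d : ℕ}
    (S S' Shat M ΔY : Matrix (Fin d) (Fin d) ℝ)
    (hS : S.PosDef) (hS' : S'.PosDef) (hShat : IsUnit Shat)
    (hM : specNorm (msqrt S * M * (msqrt S')⁻¹) ≤ 1) :
    specNorm (msqrt S * (Shat⁻¹ * (S * M + ΔY) - M) * (msqrt S')⁻¹)
      ≤ (1 + specNorm (msqrt S * (Shat⁻¹ - S⁻¹) * msqrt S))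
          * (1 + specNorm ((msqrt S)⁻¹ * ΔY * (msqrt S')⁻¹)) - 1 :=
  estimated_transition_perturbation_bound_general S S' Shat M ΔY hS hM
end
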